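/- The data (124, 957, √13852800, 3845) is an edge cuboid: 124² + 957² = 965², 124² + 13852800 = 3724², 957² + 13852800 = 3843², 124² + 957² + 13852800 = 3845², and 13852800 is not the square of any integer. -/

import Mathlib

theorem Int.not_exists_sq' {m : ℕ} {n : ℤ} (hl : (m : ℤ) ^ 2 < n) (hr : n < ((m : ℤ) + 1) ^ 2) :
    ¬∃ k : ℤ, k ^ 2 = n := by
  rintro ⟨k, rfl⟩
  rw [← Int.natAbs_sq k] at hl hr
  exact Nat.not_exists_sq' (by exact_mod_cast hl) (by exact_mod_cast hr) ⟨k.natAbs, rfl⟩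

theorem edge_cuboid_124_957 :
    124 ^ 2 + 957 ^ 2 = 965 ^ 2 ∧
    124 ^ 2 + 13852800 = 3724 ^ 2 ∧
    957 ^ 2 + 13852800 = 3843 ^ 2 ∧
    124 ^ 2 + 957 ^ 2 + 13852800 = 3845 ^ 2 ∧
    ¬ ∃ k : ℤ, k ^ 2 = 13852800 :=
  ⟨by norm_num, by norm_num, by norm_num, by norm_num,
    Int.not_exists_sq' (m := 3721) (by norm_num) (by norm_num)⟩
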